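/- Let (B^{(k)})_{k∈ℤ} be a sequence in SL(2,ℝ) with sup_{k} ‖B^{(k)}‖ ≤ C < ∞ and β := inf_{k} ‖B^{(k)}‖ > 1. For each k let s_k = s(B^{(k)}) and u_k = u(B^{(k)}) be the most contracted directions of B^{(k)} and of (B^{(k)})^{−1}, and suppose γ := inf_{k∈ℤ} |tan ∠(s_k, u_{k−1})| > 2/(β − β^{−1}), where ∠(ℓ,ℓ′) denotes the angle between the two lines ℓ, ℓ′ ∈ ℝP¹. Then there exists ρ > 1 such that ‖B^{(k+n−1)} ⋯ B^{(k+1)} B^{(k)}‖ > ρ^n for every k ∈ ℤ and every n ≥ 1. -/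

import Mathlib

/-!
Write every B = B^{(m)} in singular coordinates: orthonormal s, e and v, u with
B s = ‖B‖⁻¹ v and B e = ‖B‖ u, so that s = s(B) and u = u(B). Follow the vector
xₙ = B^{(k+n-1)} ⋯ B^{(k)} u_{k-1}. It stays in the cone tan ∠(xₙ, u_{k+n-1}) ≤ t for a
suitable t < 1/β: as tan ∠(s_{k+n}, u_{k+n-1}) ≥ γ, the subtraction formula for tangents
keeps xₙ away from s_{k+n}, so its e-component dominates. The next matrix multiplies that
component by ‖B‖ ≥ β and divides the s-component by ‖B‖, which brings the image back into
the cone around u_{k+n} and multiplies |xₙ|² by a factor bounded below by a constant > 1.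
-/
open scoped Real
open Matrix

noncomputable section

/-- 2×2 real matrices. -/
abbrev M2 : Type := Matrix (Fin 2) (Fin 2) ℝ

/-- Rotation matrix by angle θ. -/
def rot (θ : ℝ) : M2 := !![Real.cos θ, -Real.sin θ; Real.sin θ, Real.cos θ]

/-- Euclidean norm of a vector in ℝ². -/
def vnorm (w : Fin 2 → ℝ) : ℝ := ‖(WithLp.equiv 2 (Fin 2 → ℝ)).symm w‖

/-- Operator norm of a 2×2 real matrix acting on Euclidean ℝ². -/
def opNorm (A : M2) : ℝ := ‖Matrix.toEuclideanCLM (𝕜 := ℝ) A‖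

/-- Forward iterates B_n(x) = B(x+(n-1)β)⋯B(x+β)B(x). -/
def fwdIter (β : ℝ) (B : ℝ → M2) : ℕ → ℝ → M2
  | 0, _ => 1
  | n + 1, x => B (x + n * β) * fwdIter β B n x

/-- Cocycle iterates indexed by ℤ: B₀ = Id, B_n for n ≥ 1 as above, and
B_n(x) = [B_{-n}(x+nβ)]⁻¹ for n ≤ -1. -/
def cocycleIter (β : ℝ) (B : ℝ → M2) (n : ℤ) (x : ℝ) : M2 :=
  if 0 ≤ n then fwdIter β B n.toNat x else (fwdIter β B (-n).toNat (x + (n : ℝ) * β))⁻¹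

/-- Uniform hyperbolicity of the cocycle (β, B) over the circle ℝ/ℤ
(B is understood as a 1-periodic function of x): there are invariant 1-periodic line fields
s̄ (stable) and ū (unstable) with uniform exponential contraction forwards resp. backwards. -/
def IsUH (β : ℝ) (B : ℝ → M2) : Prop :=
  ∃ (s u : ℝ → Submodule ℝ (Fin 2 → ℝ)) (c ρ : ℝ),
    0 < c ∧ 1 < ρ ∧
    (∀ x, Module.finrank ℝ (s x) = 1 ∧ Module.finrank ℝ (u x) = 1) ∧
    (∀ x, s (x + 1) = s x ∧ u (x + 1) = u x) ∧
    (∀ x, (s x).map (Matrix.toLin' (B x)) = s (x + β) ∧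
          (u x).map (Matrix.toLin' (B x)) = u (x + β)) ∧
    (∀ x, ∀ n : ℕ, 1 ≤ n →
      (∀ w : Fin 2 → ℝ, w ∈ s x → vnorm w = 1 →
        vnorm ((cocycleIter β B n x) *ᵥ w) < c / ρ ^ n) ∧
      (∀ w : Fin 2 → ℝ, w ∈ u x → vnorm w = 1 →
        vnorm ((cocycleIter β B (-(n : ℤ)) x) *ᵥ w) < c / ρ ^ n))

/-- The Diophantine condition DC_{τ,γ}. -/
def DCwith (τ γ α : ℝ) : Prop :=
  ∀ p q : ℤ, q ≠ 0 → γ / |(q : ℝ)| ^ τ ≤ |α - (p : ℝ) / (q : ℝ)|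

/-- The Diophantine condition DC_τ = ∪_{γ>0} DC_{τ,γ}. -/
def DC (τ α : ℝ) : Prop := ∃ γ > 0, DCwith τ γ α

/-- Condition (V) for a 1-periodic potential: C², the derivative vanishes at exactly two
points of the circle, one a global minimum and the other a global maximum, both
non-degenerate. -/
def ConditionV (v : ℝ → ℝ) : Prop :=
  ContDiff ℝ 2 v ∧
  ∃ z₁ z₂ : ℝ, z₁ ∈ Set.Ico (0 : ℝ) 1 ∧ z₂ ∈ Set.Ico (0 : ℝ) 1 ∧ z₁ ≠ z₂ ∧
    (∀ x ∈ Set.Ico (0 : ℝ) 1, deriv v x = 0 ↔ x = z₁ ∨ x = z₂) ∧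
    (∀ x, v z₁ ≤ v x) ∧ (∀ x, v x ≤ v z₂) ∧
    iteratedDeriv 2 v z₁ ≠ 0 ∧ iteratedDeriv 2 v z₂ ≠ 0

/-- The Schrödinger cocycle map A^{(E-λv)}. -/
def schCocycle (lam : ℝ) (v : ℝ → ℝ) (E : ℝ) (x : ℝ) : M2 :=
  !![E - lam * v x, -1; 1, 0]

/-- Ordered products B^{(k+n-1)} ⋯ B^{(k+1)} B^{(k)} of a two-sided sequence of matrices. -/
def seqProd (B : ℤ → M2) (k : ℤ) : ℕ → M2
  | 0 => 1
  | n + 1 => B (k + n) * seqProd B k n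

def wedge (x y : Fin 2 → ℝ) : ℝ := x 0 * y 1 - x 1 * y 0

lemma dotProduct_fin_two (x y : Fin 2 → ℝ) : x ⬝ᵥ y = x 0 * y 0 + x 1 * y 1 := by
  simp [dotProduct, Fin.sum_univ_two]

lemma dotProduct_sq_add_wedge_sq (x y : Fin 2 → ℝ) :
    (x ⬝ᵥ y) ^ 2 + wedge x y ^ 2 = (x ⬝ᵥ x) * (y ⬝ᵥ y) := by
  simp only [dotProduct_fin_two, wedge]; ring

lemma wedge_mulVec (A : M2) (x y : Fin 2 → ℝ) :
    wedge (A *ᵥ x) (A *ᵥ y) = A.det * wedge x y := by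
  simp only [wedge, det_fin_two, mulVec, dotProduct, Fin.sum_univ_two]; ring

lemma wedge_smul_add_smul (x y z : Fin 2 → ℝ) (c d : ℝ) :
    wedge (c • x + d • y) z = c * wedge x z + d * wedge y z := by
  simp only [wedge, Pi.add_apply, Pi.smul_apply, smul_eq_mul]; ring

lemma wedge_self (x : Fin 2 → ℝ) : wedge x x = 0 := by
  simp only [wedge]; ring

lemma wedge_comm (x y : Fin 2 → ℝ) : wedge y x = - wedge x y := by
  simp only [wedge]; ring

lemma wedge_smul_eq_add (x y w : Fin 2 → ℝ) :
    wedge x y • w = wedge w y • x + wedge x w • y := by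
  ext i; fin_cases i <;>
    · simp only [wedge, Fin.zero_eta, Fin.mk_one, Fin.isValue, Pi.smul_apply, smul_eq_mul,
        Pi.add_apply]
      ring

structure IsOrthonormalPair (x y : Fin 2 → ℝ) : Prop where
  dotProduct_self_left : x ⬝ᵥ x = 1
  dotProduct_self_right : y ⬝ᵥ y = 1
  dotProduct_eq_zero : x ⬝ᵥ y = 0

namespace IsOrthonormalPair

variable {x y : Fin 2 → ℝ}

lemma symm (h : IsOrthonormalPair x y) : IsOrthonormalPair y x :=
  ⟨h.2, h.1, by rw [dotProduct_comm, h.3]⟩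

lemma wedge_sq (h : IsOrthonormalPair x y) : wedge x y ^ 2 = 1 := by
  have := dotProduct_sq_add_wedge_sq x y
  rw [h.1, h.2, h.3] at this
  linarith

lemma abs_wedge (h : IsOrthonormalPair x y) : |wedge x y| = 1 := by
  rw [← abs_one, ← sq_eq_sq_iff_abs_eq_abs, h.wedge_sq, one_pow]

lemma eq_add (h : IsOrthonormalPair x y) (w : Fin 2 → ℝ) :
    w = (w ⬝ᵥ x) • x + (w ⬝ᵥ y) • y := by
  have h1 := h.1; have h2 := h.2; have h3 := h.3
  simp only [dotProduct_fin_two] at h1 h2 h3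
  have hwy : wedge w y = (w ⬝ᵥ x) * wedge x y := by
    simp only [dotProduct_fin_two, wedge]
    linear_combination (w 1 * y 0 - w 0 * y 1) * h1 + (w 0 * x 1 - w 1 * x 0) * h3
  have hxw : wedge x w = (w ⬝ᵥ y) * wedge x y := by
    simp only [dotProduct_fin_two, wedge]
    linear_combination (x 1 * w 0 - x 0 * w 1) * h2 + (w 1 * y 0 - w 0 * y 1) * h3
  have hne : wedge x y ≠ 0 := by
    intro h0; simpa [h0] using h.wedge_sq
  apply smul_right_injective _ hne
  dsimp only
  rw [wedge_smul_eq_add, hwy, hxw, smul_add, smul_smul, smul_smul, mul_comm (wedge x y),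
    mul_comm (wedge x y)]

lemma dotProduct_self_smul_add_smul (h : IsOrthonormalPair x y) (c d : ℝ) :
    (c • x + d • y) ⬝ᵥ (c • x + d • y) = c ^ 2 + d ^ 2 := by
  simp only [add_dotProduct, dotProduct_add, smul_dotProduct, dotProduct_smul, smul_eq_mul,
    h.1, h.2, h.3, dotProduct_comm y x]
  ring

lemma dotProduct_self_eq (h : IsOrthonormalPair x y) (w : Fin 2 → ℝ) :
    w ⬝ᵥ w = (w ⬝ᵥ x) ^ 2 + (w ⬝ᵥ y) ^ 2 := by
  conv_lhs => rw [h.eq_add w]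
  exact h.dotProduct_self_smul_add_smul _ _

lemma abs_wedge_eq (h : IsOrthonormalPair x y) (w : Fin 2 → ℝ) : |wedge w x| = |w ⬝ᵥ y| := by
  conv_lhs => rw [h.eq_add w]
  rw [wedge_smul_add_smul, wedge_self, wedge_comm]
  simp [abs_mul, h.abs_wedge]

lemma smul_add_smul_dotProduct_left (h : IsOrthonormalPair x y) (c d : ℝ) :
    (c • x + d • y) ⬝ᵥ x = c := by
  simp [add_dotProduct, h.1, dotProduct_comm y x, h.3]

lemma smul_add_smul_dotProduct_right (h : IsOrthonormalPair x y) (c d : ℝ) :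
    (c • x + d • y) ⬝ᵥ y = d := by
  simp [add_dotProduct, h.2, h.3]

end IsOrthonormalPair

lemma vnorm_sq (w : Fin 2 → ℝ) : vnorm w ^ 2 = w ⬝ᵥ w := by
  rw [vnorm, ← real_inner_self_eq_norm_sq, EuclideanSpace.inner_eq_star_dotProduct]
  simp

lemma vnorm_nonneg (w : Fin 2 → ℝ) : 0 ≤ vnorm w := norm_nonneg _

lemma vnorm_eq_one {w : Fin 2 → ℝ} (h : w ⬝ᵥ w = 1) : vnorm w = 1 := by
  rw [← sq_eq_sq₀ (vnorm_nonneg w) zero_le_one, vnorm_sq, h, one_pow]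

lemma vnorm_smul (c : ℝ) (w : Fin 2 → ℝ) : vnorm (c • w) = |c| * vnorm w := by
  simp [vnorm, norm_smul]

lemma opNorm_nonneg (A : M2) : 0 ≤ opNorm A := norm_nonneg _

lemma vnorm_mulVec_le (A : M2) (w : Fin 2 → ℝ) : vnorm (A *ᵥ w) ≤ opNorm A * vnorm w :=
  (toEuclideanCLM (𝕜 := ℝ) A).le_opNorm (WithLp.toLp 2 w)

lemma opNorm_le_of_forall {A : M2} {c : ℝ} (hc : 0 ≤ c)
    (h : ∀ w, vnorm (A *ᵥ w) ≤ c * vnorm w) : opNorm A ≤ c :=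
  ContinuousLinearMap.opNorm_le_bound _ hc fun w => h (WithLp.ofLp w)

lemma opNorm_eq_of_mulVec_eq_smul {A : M2} {x y x' y' : Fin 2 → ℝ} {σ τ : ℝ}
    (hxy : IsOrthonormalPair x y) (hxy' : IsOrthonormalPair x' y')
    (hx : A *ᵥ x = σ • x') (hy : A *ᵥ y = τ • y') (hτσ : |τ| ≤ σ) : opNorm A = σ := by
  have hσ : 0 ≤ σ := (abs_nonneg τ).trans hτσ
  apply le_antisymm
  · refine opNorm_le_of_forall hσ fun w => ?_
    have hAw : A *ᵥ w = ((w ⬝ᵥ x) * σ) • x' + ((w ⬝ᵥ y) * τ) • y' := by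
      conv_lhs => rw [hxy.eq_add w]
      rw [mulVec_add, mulVec_smul, mulVec_smul, hx, hy, smul_smul, smul_smul]
    have hτ2 : τ ^ 2 ≤ σ ^ 2 := by rw [← sq_abs]; gcongr
    rw [← sq_le_sq₀ (vnorm_nonneg _) (mul_nonneg hσ (vnorm_nonneg w)), mul_pow, vnorm_sq,
      vnorm_sq, hAw, hxy'.dotProduct_self_smul_add_smul, hxy.dotProduct_self_eq w]
    nlinarith [mul_le_mul_of_nonneg_left hτ2 (sq_nonneg (w ⬝ᵥ y))]
  · simpa [hx, vnorm_smul, vnorm_eq_one hxy.1, vnorm_eq_one hxy'.1, abs_of_nonneg hσ]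
      using vnorm_mulVec_le A x

/-- `s` spans the most contracted direction s(A) and `u` the direction u(A) = s(A⁻¹)
(see `IsSingularFrame.inv`). -/
structure IsSingularFrame (A : M2) (s e v u : Fin 2 → ℝ) : Prop where
  source : IsOrthonormalPair s e
  target : IsOrthonormalPair v u
  mulVec_contracted : A *ᵥ s = (opNorm A)⁻¹ • v
  mulVec_expanded : A *ᵥ e = opNorm A • u

/-- For f = (cos θ, sin θ) and g = f rotated by π/2, `(A f) ⬝ᵥ (A g)` equals
q cos 2θ - (p - r)/2 sin 2θ, where p, q, r are the entries of AᵀA; the choice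
2θ = arg (p - r + 2qi) makes it vanish. -/
lemma exists_isOrthonormalPair_mulVec_orthogonal (A : M2) :
    ∃ f g, IsOrthonormalPair f g ∧ (A *ᵥ f) ⬝ᵥ (A *ᵥ g) = 0 := by
  set p := A 0 0 ^ 2 + A 1 0 ^ 2
  set q := A 0 0 * A 0 1 + A 1 0 * A 1 1
  set r := A 0 1 ^ 2 + A 1 1 ^ 2
  set z : ℂ := ⟨p - r, 2 * q⟩
  set θ := Complex.arg z / 2
  refine ⟨![Real.cos θ, Real.sin θ], ![-Real.sin θ, Real.cos θ], ⟨?_, ?_, ?_⟩, ?_⟩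
  · simp [← sq]
  · simp [← sq]
  · simp only [dotProduct_fin_two, cons_val_zero, cons_val_one]; ring
  have hD : (A *ᵥ ![Real.cos θ, Real.sin θ]) ⬝ᵥ (A *ᵥ ![-Real.sin θ, Real.cos θ])
      = q * Real.cos (Complex.arg z) - (p - r) / 2 * Real.sin (Complex.arg z) := by
    rw [show Complex.arg z = 2 * θ by ring, Real.cos_two_mul, Real.sin_two_mul]
    simp only [dotProduct, mulVec, Fin.sum_univ_two, Fin.isValue, cons_val_zero, cons_val_one,
      p, q, r]
    linear_combination (-q) * Real.cos_sq_add_sin_sq θ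
  rw [hD]
  rcases eq_or_ne z 0 with hz | hz
  · have hq : q = 0 := by simpa [z] using congrArg Complex.im hz
    simp [hz, hq]
  · have hre := Complex.norm_mul_cos_arg z
    have him := Complex.norm_mul_sin_arg z
    have hnorm : ‖z‖ ≠ 0 := norm_ne_zero_iff.mpr hz
    apply mul_left_cancel₀ hnorm
    simp only [z] at hre him
    linear_combination q * hre - (p - r) / 2 * him

lemma isSingularFrame_of_orthogonal {A : M2} (hA : |A.det| = 1) {f g : Fin 2 → ℝ}
    (hfg : IsOrthonormalPair f g) (horth : (A *ᵥ f) ⬝ᵥ (A *ᵥ g) = 0)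
    (hle : vnorm (A *ᵥ g) ≤ vnorm (A *ᵥ f)) :
    IsSingularFrame A g f (vnorm (A *ᵥ f) • (A *ᵥ g)) ((vnorm (A *ᵥ f))⁻¹ • (A *ᵥ f)) := by
  set α := vnorm (A *ᵥ f)
  have hαdef : vnorm (A *ᵥ f) = α := rfl
  have hprod : α ^ 2 * vnorm (A *ᵥ g) ^ 2 = 1 := by
    have h := dotProduct_sq_add_wedge_sq (A *ᵥ f) (A *ᵥ g)
    rw [horth, wedge_mulVec, mul_pow, ← sq_abs A.det, hA, hfg.wedge_sq, ← vnorm_sq, ← vnorm_sq,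
      hαdef] at h
    linarith
  have hα : 0 < α := by
    rcases (vnorm_nonneg (A *ᵥ f)).lt_or_eq with h | h
    · exact h
    · simp [α, ← h] at hprod
  have hg : vnorm (A *ᵥ g) = α⁻¹ := by
    refine (inv_eq_of_mul_eq_one_right ?_).symm
    rw [← sq_eq_sq₀ (mul_nonneg hα.le (vnorm_nonneg _)) zero_le_one, mul_pow, hprod, one_pow]
  have hu : IsOrthonormalPair (α • (A *ᵥ g)) (α⁻¹ • (A *ᵥ f)) := by
    refine ⟨?_, ?_, ?_⟩
    · rw [smul_dotProduct, dotProduct_smul, ← vnorm_sq, hg, smul_eq_mul, smul_eq_mul]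
      field_simp
    · rw [smul_dotProduct, dotProduct_smul, ← vnorm_sq, hαdef, smul_eq_mul, smul_eq_mul]
      field_simp
    · rw [smul_dotProduct, dotProduct_smul, dotProduct_comm, horth, smul_zero, smul_zero]
  have hnorm : opNorm A = α := by
    refine opNorm_eq_of_mulVec_eq_smul hfg hu.symm (x' := α⁻¹ • (A *ᵥ f))
      (y' := α • (A *ᵥ g)) (τ := α⁻¹) ?_ ?_ ?_
    · rw [smul_smul, mul_inv_cancel₀ hα.ne', one_smul]
    · rw [smul_smul, inv_mul_cancel₀ hα.ne', one_smul]
    · rw [abs_of_pos (inv_pos.mpr hα), ← hg]; exact hle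
  refine ⟨hfg.symm, hu, ?_, ?_⟩
  · rw [hnorm, smul_smul, inv_mul_cancel₀ hα.ne', one_smul]
  · rw [hnorm, smul_smul, mul_inv_cancel₀ hα.ne', one_smul]

lemma exists_isSingularFrame {A : M2} (hA : |A.det| = 1) :
    ∃ s e v u, IsSingularFrame A s e v u := by
  obtain ⟨f, g, hfg, horth⟩ := exists_isOrthonormalPair_mulVec_orthogonal A
  rcases le_total (vnorm (A *ᵥ g)) (vnorm (A *ᵥ f)) with hle | hle
  · exact ⟨_, _, _, _, isSingularFrame_of_orthogonal hA hfg horth hle⟩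
  · rw [dotProduct_comm] at horth
    exact ⟨_, _, _, _, isSingularFrame_of_orthogonal hA hfg.symm horth hle⟩

namespace IsSingularFrame

variable {A : M2} {s e v u : Fin 2 → ℝ}

lemma vnorm_mulVec_contracted (hF : IsSingularFrame A s e v u) :
    vnorm (A *ᵥ s) = (opNorm A)⁻¹ := by
  rw [hF.mulVec_contracted, vnorm_smul, vnorm_eq_one hF.target.1, mul_one,
    abs_of_nonneg (inv_nonneg.mpr (opNorm_nonneg A))]

lemma inv (hF : IsSingularFrame A s e v u) (hA : IsUnit A.det) :
    IsSingularFrame A⁻¹ u v e s := by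
  have hcancel : ∀ x, A⁻¹ *ᵥ (A *ᵥ x) = x := fun x => by
    rw [mulVec_mulVec, nonsing_inv_mul A hA, one_mulVec]
  have ha : opNorm A ≠ 0 := by
    intro h0
    have he := hcancel e
    rw [hF.mulVec_expanded, h0, zero_smul, mulVec_zero] at he
    simpa [← he] using hF.source.2
  have hv : A⁻¹ *ᵥ v = opNorm A • s := by
    rw [← hcancel s, hF.mulVec_contracted, mulVec_smul, smul_smul, mul_inv_cancel₀ ha, one_smul]
  have hu : A⁻¹ *ᵥ u = (opNorm A)⁻¹ • e := by
    rw [← hcancel e, hF.mulVec_expanded, mulVec_smul, smul_smul, inv_mul_cancel₀ ha, one_smul]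
  have hle : |(opNorm A)⁻¹| ≤ opNorm A := by
    rw [abs_of_nonneg (inv_nonneg.mpr (opNorm_nonneg A)), ← hF.vnorm_mulVec_contracted]
    simpa [vnorm_eq_one hF.source.1] using vnorm_mulVec_le A s
  have hnorm : opNorm A⁻¹ = opNorm A :=
    opNorm_eq_of_mulVec_eq_smul hF.target hF.source hv hu hle
  exact ⟨hF.target.symm, hF.source.symm, by rw [hu, hnorm], by rw [hv, hnorm]⟩

lemma mulVec_eq (hF : IsSingularFrame A s e v u) (x : Fin 2 → ℝ) :
    A *ᵥ x = ((x ⬝ᵥ s) / opNorm A) • v + (opNorm A * (x ⬝ᵥ e)) • u := by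
  conv_lhs => rw [hF.source.eq_add x]
  rw [mulVec_add, mulVec_smul, mulVec_smul, hF.mulVec_contracted, hF.mulVec_expanded, smul_smul,
    smul_smul, div_eq_mul_inv, mul_comm (opNorm A)]

end IsSingularFrame

/-- The subtraction formula for tangents: if tan ∠(x, w) ≤ t and tan ∠(y, w) ≥ γ, then
tan ∠(x, y) ≥ (γ - t) / (1 + γ t). -/
lemma le_abs_wedge_of_cone {x y w : Fin 2 → ℝ} {γ t : ℝ} (hw : w ≠ 0) (hγ : 0 ≤ γ) (ht : 0 ≤ t)
    (hx : |wedge x w| ≤ t * |x ⬝ᵥ w|) (hy : γ * |y ⬝ᵥ w| ≤ |wedge y w|) :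
    (γ - t) * |x ⬝ᵥ y| ≤ (1 + γ * t) * |wedge x y| := by
  have hww : 0 < w ⬝ᵥ w :=
    lt_of_le_of_ne (by rw [← vnorm_sq]; positivity) (Ne.symm (dotProduct_self_eq_zero.not.mpr hw))
  have hdot : (x ⬝ᵥ y) * (w ⬝ᵥ w) = (x ⬝ᵥ w) * (y ⬝ᵥ w) + wedge x w * wedge y w := by
    simp only [dotProduct_fin_two, wedge]; ring
  have hwedge : wedge x y * (w ⬝ᵥ w) = wedge x w * (y ⬝ᵥ w) - (x ⬝ᵥ w) * wedge y w := by
    simp only [dotProduct_fin_two, wedge]; ring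
  refine le_of_mul_le_mul_right ?_ hww
  rw [mul_assoc, mul_assoc, ← abs_of_pos hww, ← abs_mul, ← abs_mul, hdot, hwedge]
  rcases le_or_gt γ t with hγt | hγt
  · exact (mul_nonpos_of_nonpos_of_nonneg (by linarith) (abs_nonneg _)).trans (by positivity)
  set a := |x ⬝ᵥ w|
  set a' := |wedge x w|
  set b := |y ⬝ᵥ w|
  set b' := |wedge y w|
  have hdot_le : |(x ⬝ᵥ w) * (y ⬝ᵥ w) + wedge x w * wedge y w| ≤ a * b + a' * b' :=
    (abs_add_le _ _).trans (by rw [abs_mul, abs_mul])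
  have hwedge_ge : a * b' - a' * b ≤ |wedge x w * (y ⬝ᵥ w) - (x ⬝ᵥ w) * wedge y w| := by
    rw [abs_sub_comm, ← abs_mul, ← abs_mul]; exact abs_sub_abs_le_abs_sub _ _
  have ha : 0 ≤ a := abs_nonneg _
  have hb : 0 ≤ b := abs_nonneg _
  have hγt' : 0 ≤ γ - t := by linarith
  have hcoef : 0 ≤ a * (1 + γ * t) - (γ - t) * a' := by
    nlinarith [mul_le_mul_of_nonneg_left hx hγt', mul_nonneg ha (sq_nonneg t)]
  nlinarith [mul_nonneg (sub_nonneg.mpr hy) hcoef,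
    mul_nonneg (mul_nonneg hb (sub_nonneg.mpr hx)) (by positivity : (0 : ℝ) ≤ 1 + γ ^ 2),
    mul_le_mul_of_nonneg_left hdot_le hγt',
    mul_le_mul_of_nonneg_left hwedge_ge (by positivity : (0 : ℝ) ≤ 1 + γ * t)]

/-- The minimum of (c² / β² + β² d²) / (c² + d²) over |c| ≤ K |d|. -/
def coneGrowth (β K : ℝ) : ℝ := (β ^ 4 + K ^ 2) / (β ^ 2 * (1 + K ^ 2))

lemma one_lt_coneGrowth {β K : ℝ} (hβ : 1 < β) (hK0 : 0 ≤ K) (hK : K < β) :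
    1 < coneGrowth β K := by
  rw [coneGrowth, one_lt_div (by positivity)]
  nlinarith [mul_lt_mul_of_pos_left (pow_lt_pow_left₀ hK hK0 two_ne_zero)
    (by nlinarith : (0 : ℝ) < β ^ 2 - 1)]

lemma coneGrowth_mul_le {β K a c d : ℝ} (hβ : 1 ≤ β) (ha : β ≤ a) (hK0 : 0 ≤ K)
    (hK : K ≤ β ^ 2) (hcd : |c| ≤ K * |d|) :
    coneGrowth β K * (c ^ 2 + d ^ 2) ≤ (c / a) ^ 2 + (a * d) ^ 2 := by
  have hβ0 : 0 < β := by linarith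
  have ha0 : 0 < a := by linarith
  have hc2 : c ^ 2 ≤ K ^ 2 * d ^ 2 := by
    rw [← sq_abs c, ← sq_abs d, ← mul_pow]; gcongr
  have hK2 : K ^ 2 ≤ β ^ 4 := by nlinarith [pow_le_pow_left₀ hK0 hK 2]
  have hat : c ^ 2 / β ^ 2 + (β * d) ^ 2 ≤ (c / a) ^ 2 + (a * d) ^ 2 := by
    rw [div_pow, mul_pow, mul_pow, div_add' _ _ _ (by positivity), div_add' _ _ _ (by positivity),
      div_le_div_iff₀ (by positivity) (by positivity)]
    have hβa : β ^ 2 ≤ a ^ 2 := pow_le_pow_left₀ hβ0.le ha 2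
    have hc : c ^ 2 ≤ a ^ 2 * β ^ 2 * d ^ 2 := by
      nlinarith [mul_le_mul_of_nonneg_right hK2 (sq_nonneg d),
        mul_le_mul_of_nonneg_right hβa (mul_nonneg (sq_nonneg β) (sq_nonneg d))]
    nlinarith [mul_le_mul_of_nonneg_left hc (sub_nonneg.mpr hβa)]
  have hβ4 : 1 ≤ β ^ 4 := one_le_pow₀ hβ
  have hid : c ^ 2 / β ^ 2 + (β * d) ^ 2 - coneGrowth β K * (c ^ 2 + d ^ 2)
      = (β ^ 4 - 1) * (K ^ 2 * d ^ 2 - c ^ 2) / (β ^ 2 * (1 + K ^ 2)) := by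
    rw [coneGrowth]; field_simp; ring
  have hnonneg : 0 ≤ (β ^ 4 - 1) * (K ^ 2 * d ^ 2 - c ^ 2) / (β ^ 2 * (1 + K ^ 2)) := by
    apply div_nonneg (mul_nonneg (by linarith) (by linarith)) (by positivity)
  linarith

namespace IsSingularFrame

variable {A : M2} {s e v u x : Fin 2 → ℝ} {β K t : ℝ}

lemma coneGrowth_mul_dotProduct_self_le (hF : IsSingularFrame A s e v u) (hβ : 1 ≤ β)
    (hβA : β ≤ opNorm A) (hK0 : 0 ≤ K) (hK : K ≤ β ^ 2) (hx : |x ⬝ᵥ s| ≤ K * |wedge x s|) :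
    coneGrowth β K * (x ⬝ᵥ x) ≤ (A *ᵥ x) ⬝ᵥ (A *ᵥ x) := by
  rw [hF.mulVec_eq, hF.target.dotProduct_self_smul_add_smul, hF.source.dotProduct_self_eq x]
  rw [hF.source.abs_wedge_eq] at hx
  exact coneGrowth_mul_le hβ hβA hK0 hK hx

lemma abs_wedge_mulVec_le (hF : IsSingularFrame A s e v u) (hβ : 0 < β) (hβA : β ≤ opNorm A)
    (hx : |x ⬝ᵥ s| ≤ β ^ 2 * t * |wedge x s|) : |wedge (A *ᵥ x) u| ≤ t * |(A *ᵥ x) ⬝ᵥ u| := by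
  rw [hF.target.symm.abs_wedge_eq, hF.mulVec_eq, hF.target.smul_add_smul_dotProduct_left,
    hF.target.smul_add_smul_dotProduct_right, abs_div, abs_mul, abs_of_pos (hβ.trans_le hβA),
    div_le_iff₀ (hβ.trans_le hβA)]
  rw [hF.source.abs_wedge_eq] at hx
  have ht : 0 ≤ t * |x ⬝ᵥ e| := by
    have := (abs_nonneg _).trans hx
    rw [mul_assoc] at this
    exact nonneg_of_mul_nonneg_right this (by positivity)
  nlinarith [mul_le_mul_of_nonneg_right (pow_le_pow_left₀ hβ.le hβA 2) ht]

end IsSingularFrame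

/-- Chosen so that γ t (β² - 1) = 2, which turns β² t (γ - t) - (1 + γ t) into 1 - (β t)². -/
def coneSlope (β γ : ℝ) : ℝ := 2 / (γ * (β ^ 2 - 1))

lemma coneSlope_spec {β γ : ℝ} (hβ : 1 < β) (hγ : 2 / (β - β⁻¹) < γ) :
    0 < γ ∧ 0 < coneSlope β γ ∧ β * coneSlope β γ < 1 ∧ coneSlope β γ < γ ∧
      1 + γ * coneSlope β γ ≤ β ^ 2 * coneSlope β γ * (γ - coneSlope β γ) := by
  have hβ0 : 0 < β := by linarith
  have hβ2 : 0 < β ^ 2 - 1 := by nlinarith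
  have hsub : β - β⁻¹ = (β ^ 2 - 1) / β := by field_simp
  rw [hsub, div_div_eq_mul_div, div_lt_iff₀ hβ2] at hγ
  have hγ0 : 0 < γ := by nlinarith
  set t := coneSlope β γ
  have hγt : γ * (β ^ 2 - 1) * t = 2 := by simp only [t, coneSlope]; field_simp
  have ht : 0 < t := by simp only [t, coneSlope]; positivity
  have hβt : β * t < 1 := by nlinarith
  have hβt2 : (β * t) ^ 2 < 1 := by nlinarith [mul_pos hβ0 ht]
  refine ⟨hγ0, ht, hβt, by nlinarith, by nlinarith⟩

lemma exists_one_lt_forall_pow_lt {r : ℝ} (hr : 1 < r) :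
    ∃ ρ > 1, ∀ n : ℕ, n ≠ 0 → ∀ y : ℝ, 0 ≤ y → r ^ n ≤ y ^ 2 → ρ ^ n < y := by
  obtain ⟨r', hr', hr'r⟩ := exists_between hr
  refine ⟨√r', show 1 < √r' by rwa [Real.lt_sqrt zero_le_one, one_pow], fun n hn y hy hry => ?_⟩
  refine lt_of_pow_lt_pow_left₀ 2 hy ?_
  rw [← pow_mul, mul_comm, pow_mul, Real.sq_sqrt (by linarith)]
  exact (pow_lt_pow_left₀ hr'r (by linarith) hn).trans_le hry

lemma seqProd_mulVec_cone_growth {B : ℤ → M2} {s e v u : ℤ → Fin 2 → ℝ} {β γ t : ℝ}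
    (hF : ∀ m, IsSingularFrame (B m) (s m) (e m) (v m) (u m)) (hβ : 1 ≤ β)
    (hβB : ∀ m, β ≤ opNorm (B m))
    (hangle : ∀ m, γ * |s m ⬝ᵥ u (m - 1)| ≤ |wedge (s m) (u (m - 1))|)
    (hγ : 0 ≤ γ) (ht : 0 ≤ t) (ht1 : t ≤ 1) (htγ : t < γ)
    (hK : 1 + γ * t ≤ β ^ 2 * t * (γ - t)) (k : ℤ) :
    ∀ n : ℕ, coneGrowth β (β ^ 2 * t) ^ n ≤
        (seqProd B k n *ᵥ u (k - 1)) ⬝ᵥ (seqProd B k n *ᵥ u (k - 1)) ∧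
      |wedge (seqProd B k n *ᵥ u (k - 1)) (u (k + n - 1))| ≤
        t * |(seqProd B k n *ᵥ u (k - 1)) ⬝ᵥ u (k + n - 1)|
  | 0 => by simp [seqProd, wedge_self, (hF (k - 1)).target.2, ht]
  | n + 1 => by
    obtain ⟨hgrow, hcone⟩ := seqProd_mulVec_cone_growth hF hβ hβB hangle hγ ht ht1 htγ hK k n
    set x := seqProd B k n *ᵥ u (k - 1)
    set m := k + n
    have hsucc : seqProd B k (n + 1) *ᵥ u (k - 1) = B m *ᵥ x := by
      simp only [seqProd, x, m, mulVec_mulVec]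
    have hidx : k + ((n + 1 : ℕ) : ℤ) - 1 = m := by push_cast; ring
    have hw : u (m - 1) ≠ 0 := fun h0 => by simpa [h0] using (hF (m - 1)).target.2
    have hsep : |x ⬝ᵥ s m| ≤ β ^ 2 * t * |wedge x (s m)| := by
      have h := le_abs_wedge_of_cone hw hγ ht hcone (hangle m)
      have hγt : 0 < γ - t := by linarith
      refine le_of_mul_le_mul_left ?_ hγt
      nlinarith [mul_le_mul_of_nonneg_right hK (abs_nonneg (wedge x (s m)))]
    have hK0 : 0 ≤ β ^ 2 * t := by positivity
    have hKβ : β ^ 2 * t ≤ β ^ 2 := mul_le_of_le_one_right (by positivity) ht1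
    rw [hsucc, hidx, pow_succ']
    refine ⟨?_, (hF m).abs_wedge_mulVec_le (by linarith) (hβB m) hsep⟩
    calc coneGrowth β (β ^ 2 * t) * coneGrowth β (β ^ 2 * t) ^ n
        ≤ coneGrowth β (β ^ 2 * t) * (x ⬝ᵥ x) := by
          gcongr
          unfold coneGrowth; positivity
      _ ≤ (B m *ᵥ x) ⬝ᵥ (B m *ᵥ x) :=
          (hF m).coneGrowth_mul_dotProduct_self_le hβ (hβB m) hK0 hKβ hsep

theorem norm_prod_growth_general (B : ℤ → M2) (hdet : ∀ k, (B k).det = 1)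
    (β γ : ℝ)
    (hβ : 1 < β) (hβle : ∀ k, β ≤ opNorm (B k))
    (hγ : 2 / (β - β⁻¹) < γ)
    (hangle : ∀ k : ℤ, ∀ a b : Fin 2 → ℝ, vnorm a = 1 → vnorm b = 1 →
      vnorm ((B k) *ᵥ a) = (opNorm (B k))⁻¹ →
      vnorm ((B (k - 1))⁻¹ *ᵥ b) = (opNorm ((B (k - 1))⁻¹))⁻¹ →
      γ * |a 0 * b 0 + a 1 * b 1| ≤ |a 0 * b 1 - a 1 * b 0|) :
    ∃ ρ > (1 : ℝ), ∀ k : ℤ, ∀ n : ℕ, 1 ≤ n → ρ ^ n < opNorm (seqProd B k n) := by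
  choose s e v u hF using fun k => exists_isSingularFrame (A := B k) (by rw [hdet, abs_one])
  have hangle' : ∀ m, γ * |s m ⬝ᵥ u (m - 1)| ≤ |wedge (s m) (u (m - 1))| := fun m => by
    have hinv := (hF (m - 1)).inv (by rw [hdet]; exact isUnit_one)
    simpa only [dotProduct_fin_two, wedge] using
      hangle m _ _ (vnorm_eq_one (hF m).source.1) (vnorm_eq_one (hF (m - 1)).target.2)
        (hF m).vnorm_mulVec_contracted hinv.vnorm_mulVec_contracted
  obtain ⟨hγ0, ht0, hβt, htγ, hK⟩ := coneSlope_spec hβ hγ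
  obtain ⟨ρ, hρ, hρ_lt⟩ := exists_one_lt_forall_pow_lt
    (one_lt_coneGrowth hβ (by positivity) (by nlinarith : β ^ 2 * coneSlope β γ < β))
  refine ⟨ρ, hρ, fun k n hn => hρ_lt n (by omega) _ (opNorm_nonneg _) ?_⟩
  have hgrowth := (seqProd_mulVec_cone_growth hF hβ.le hβle hangle' hγ0.le ht0.le
    (by nlinarith) htγ hK k n).1
  calc _ ≤ _ := hgrowth
    _ = vnorm (seqProd B k n *ᵥ u (k - 1)) ^ 2 := (vnorm_sq _).symm
    _ ≤ opNorm (seqProd B k n) ^ 2 := by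
      have h := vnorm_mulVec_le (seqProd B k n) (u (k - 1))
      rw [vnorm_eq_one (hF (k - 1)).target.2, mul_one] at h
      exact pow_le_pow_left₀ (vnorm_nonneg _) h 2

/-- If a bounded sequence (B^{(k)}) in SL(2,ℝ) satisfies ‖B^{(k)}‖ ≥ β > 1 for all k and the
angles between consecutive most contracted directions s(B^{(k)}) and u(B^{(k-1)}) = s((B^{(k-1)})⁻¹)
satisfy |tan ∠| ≥ γ > 2/(β - β⁻¹) (encoded below for unit vectors a ∈ s(B^{(k)}),
b ∈ u(B^{(k-1)}) as γ·|cos ∠(a,b)| ≤ |sin ∠(a,b)|), then products grow uniformly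
exponentially: there is ρ > 1 with ‖B^{(k+n-1)} ⋯ B^{(k)}‖ > ρⁿ for all k and n ≥ 1. -/
theorem norm_prod_growth (B : ℤ → M2) (hdet : ∀ k, (B k).det = 1)
    (Cb β γ : ℝ) (hC : ∀ k, opNorm (B k) ≤ Cb)
    (hβ : 1 < β) (hβle : ∀ k, β ≤ opNorm (B k))
    (hγ : 2 / (β - β⁻¹) < γ)
    (hangle : ∀ k : ℤ, ∀ a b : Fin 2 → ℝ, vnorm a = 1 → vnorm b = 1 →
      vnorm ((B k) *ᵥ a) = (opNorm (B k))⁻¹ →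
      vnorm ((B (k - 1))⁻¹ *ᵥ b) = (opNorm ((B (k - 1))⁻¹))⁻¹ →
      γ * |a 0 * b 0 + a 1 * b 1| ≤ |a 0 * b 1 - a 1 * b 0|) :
    ∃ ρ > (1 : ℝ), ∀ k : ℤ, ∀ n : ℕ, 1 ≤ n → ρ ^ n < opNorm (seqProd B k n) :=
  norm_prod_growth_general B hdet β γ hβ hβle hγ hangle
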